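/- arXiv:2104.10537 — 3 statements merged into one kernel-verified Lean document; each statement's English description precedes it below -/
import Mathlib

section
/- For any fixed time t₀ > 0, the union of all characteristic triangles with apex at time t₀ covers the strip below t₀: ⋃_{x ∈ [0,∞)} Δ(x,t₀) = {(x,t) : x ∈ [0,∞), 0 ≤ t ≤ t₀}. -/
/-!
Parametrise the boundary of the quarter plane by `boundaryPoint`: the initial line for `s ≥ 0`,
the boundary line for `s ≤ 0`. Gluing `F` and `G` along it gives one potential of `s` whose
minimizers are the feet of the characteristics through the apex `(x, t)`, and every boundary point
between two of them lies in `Δ(x, t)`; at `x = 0` the triangle even contains the whole arc from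
`(0, t)` down to any minimizer.

The glued potential is jointly continuous in `(x, s)`, so its minimizers form a closed set; they
are confined to `-t ≤ s ≤ x + t M`, and to `x - t M ≤ s` once `x > t M`, where `M` bounds `|u₀|`
and `|u_b|`. Given `P` below height `t`, let `p x` be the parameter of the point where the ray from
`(x, t)` through `P` leaves the quarter plane; `p` is continuous. Unless `P` is caught by the fan at
`x = 0`, some minimizer lies below `p` at `x = 0` and every minimizer lies above `p` for large `x`.
By connectedness of an interval some apex `x` has minimizers on both sides of `p x`, so the exit
point lies in `Δ(x, t)`, and `P` with it by convexity.
-/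

open MeasureTheory Set Filter

noncomputable def Fpot (ρ0 u0 : ℝ → ℝ) (y x t : ℝ) : ℝ :=
  ∫ η in (0:ℝ)..y, (t * u0 η + η - x) * ρ0 η

noncomputable def Gpot (ρb ub : ℝ → ℝ) (τ x t : ℝ) : ℝ :=
  ∫ η in (0:ℝ)..τ, (x - ub η * (t - η)) * (ρb η * ub η)

/-- `a` minimizes `f` over `[0, ∞)`. -/
def MinimizesOn (f : ℝ → ℝ) (a : ℝ) : Prop :=
  0 ≤ a ∧ ∀ b, 0 ≤ b → f a ≤ f b

/-- `a` is the smallest minimizer of `f` over `[0, ∞)`. -/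
def SmallestMinimizer (f : ℝ → ℝ) (a : ℝ) : Prop :=
  MinimizesOn f a ∧ ∀ b, MinimizesOn f b → a ≤ b

/-- `a` is the largest minimizer of `f` over `[0, ∞)`. -/
def LargestMinimizer (f : ℝ → ℝ) (a : ℝ) : Prop :=
  MinimizesOn f a ∧ ∀ b, MinimizesOn f b → b ≤ a

/-- `v` is the (attained) minimum value of `f` over `[0, ∞)`. -/
def IsMinValue (f : ℝ → ℝ) (v : ℝ) : Prop :=
  (∃ a, 0 ≤ a ∧ f a = v) ∧ ∀ b, 0 ≤ b → v ≤ f b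

open Classical in
/-- The characteristic triangle with apex `(x, t)`. -/
noncomputable def charTriangle (Fm Gm ys yS τs τS : ℝ → ℝ → ℝ) (x t : ℝ) : Set (ℝ × ℝ) :=
  if x = 0 ∧ Fm x t < Gm x t then
    convexHull ℝ {((0:ℝ), t), ((0:ℝ), (0:ℝ)), (yS 0 t, (0:ℝ))}
  else if Fm x t < Gm x t then
    convexHull ℝ {(x, t), (ys x t, (0:ℝ)), (yS x t, (0:ℝ))}
  else if Gm x t < Fm x t then
    convexHull ℝ {(x, t), ((0:ℝ), τs x t), ((0:ℝ), τS x t)}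
  else
    convexHull ℝ {(x, t), (yS x t, (0:ℝ)), ((0:ℝ), τS x t), ((0:ℝ), (0:ℝ))}

lemma intervalIntegrable_mul_of_abs_le {w g : ℝ → ℝ} {K C : ℝ} (hK : 0 ≤ K)
    (hw : IntervalIntegrable w volume 0 K) (hg : Measurable g) (hC : ∀ η ∈ Icc 0 K, |g η| ≤ C) :
    IntervalIntegrable (fun η => g η * w η) volume 0 K := by
  rw [intervalIntegrable_iff_integrableOn_Ioc_of_le hK] at hw ⊢
  exact hw.bdd_mul hg.aestronglyMeasurable
    (ae_restrict_of_forall_mem measurableSet_Ioc fun η hη => hC η (Ioc_subset_Icc_self hη))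

lemma intervalIntegrable_of_pos_of_le {ρ : ℝ → ℝ} (hmeas : Measurable ρ)
    (hpos : ∀ η, 0 ≤ η → 0 < ρ η) (hloc : ∀ K : ℝ, ∃ M : ℝ, ∀ η ∈ Icc (0 : ℝ) K, ρ η ≤ M)
    {K : ℝ} (hK : 0 ≤ K) : IntervalIntegrable ρ volume 0 K := by
  obtain ⟨M, hM⟩ := hloc K
  simpa using intervalIntegrable_mul_of_abs_le hK (intervalIntegrable_const (c := 1)) hmeas
    fun η hη => (abs_of_pos (hpos η hη.1)).trans_le (hM η hη)

lemma integral_lt_integral_of_pos_on {f : ℝ → ℝ} {a b c : ℝ}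
    (hf : IntervalIntegrable f volume a c) (hab : a ≤ b) (hbc : b < c)
    (hpos : ∀ η ∈ Ioo b c, 0 < f η) : ∫ η in a..b, f η < ∫ η in a..c, f η := by
  have hab' : IntervalIntegrable f volume a b :=
    hf.mono_set (uIcc_subset_uIcc_left (by simp [uIcc_of_le (hab.trans hbc.le), hab, hbc.le]))
  have hbc' : IntervalIntegrable f volume b c :=
    hf.mono_set (uIcc_subset_uIcc_right (by simp [uIcc_of_le (hab.trans hbc.le), hab, hbc.le]))
  rw [← intervalIntegral.integral_add_adjacent_intervals hab' hbc']
  linarith [intervalIntegral.intervalIntegral_pos_of_pos_on hbc' hpos hbc]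

lemma integral_lt_integral_of_neg_on {f : ℝ → ℝ} {a b c : ℝ}
    (hf : IntervalIntegrable f volume a c) (hab : a ≤ b) (hbc : b < c)
    (hneg : ∀ η ∈ Ioo b c, f η < 0) : ∫ η in a..c, f η < ∫ η in a..b, f η := by
  have := integral_lt_integral_of_pos_on (f := fun η => -f η) hf.neg hab hbc
    fun η hη => neg_pos.2 (hneg η hη)
  simpa only [intervalIntegral.integral_neg, neg_lt_neg_iff] using this

lemma continuous_integral_max {f : ℝ → ℝ}
    (hf : ∀ K, 0 ≤ K → IntervalIntegrable f volume 0 K) :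
    Continuous fun s => ∫ η in 0..max s 0, f η := by
  have hon : ContinuousOn (fun y => ∫ η in 0..y, f η) (Ici 0) := fun y hy => by
    have hy' : 0 ≤ y + 1 := by linarith [mem_Ici.1 hy]
    refine (intervalIntegral.continuousWithinAt_primitive (b₁ := 0) (b₂ := y + 1)
      (measure_singleton y) (by simpa [hy'] using hf _ hy')).mono_of_mem_nhdsWithin ?_
    exact mem_nhdsWithin.2 ⟨Iio (y + 1), isOpen_Iio, by simp, fun z hz => ⟨hz.2, hz.1.le⟩⟩
  exact hon.comp_continuous (continuous_id.max continuous_const) fun s => le_max_right s 0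

lemma isClosed_setOf_isMinOn {X Y : Type*} [TopologicalSpace X] [TopologicalSpace Y]
    {f : X → Y → ℝ} (hf : Continuous fun q : X × Y => f q.1 q.2) :
    IsClosed {q : X × Y | IsMinOn (f q.1) univ q.2} := by
  simp only [isMinOn_univ_iff, ofPred_forall]
  exact isClosed_iInter fun y => isClosed_le hf (hf.comp (continuous_fst.prodMk continuous_const))

lemma exists_crossing {S : Set (ℝ × ℝ)} (hS : IsClosed S) {p : ℝ → ℝ} (hp : Continuous p)
    {a b lo hi : ℝ} (hab : a ≤ b) (hsec : ∀ x ∈ Icc a b, ∃ s, (x, s) ∈ S)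
    (hbdd : ∀ q ∈ S, q.1 ∈ Icc a b → q.2 ∈ Icc lo hi) (ha : ∃ s, (a, s) ∈ S ∧ s ≤ p a)
    (hb : ∃ s, (b, s) ∈ S ∧ p b ≤ s) :
    ∃ x ∈ Icc a b, ∃ s₁ s₂, (x, s₁) ∈ S ∧ (x, s₂) ∈ S ∧ s₁ ≤ p x ∧ p x ≤ s₂ := by
  set T := S ∩ Icc a b ×ˢ Icc lo hi
  have hT : IsCompact T := (isCompact_Icc.prod isCompact_Icc).inter_left hS
  have hA : IsClosed (Prod.fst '' (T ∩ {q | q.2 ≤ p q.1})) :=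
    ((hT.inter_right (isClosed_le continuous_snd (hp.comp continuous_fst))).image
      continuous_fst).isClosed
  have hB : IsClosed (Prod.fst '' (T ∩ {q | p q.1 ≤ q.2})) :=
    ((hT.inter_right (isClosed_le (hp.comp continuous_fst) continuous_snd)).image
      continuous_fst).isClosed
  have hmem : ∀ x ∈ Icc a b, ∀ s, (x, s) ∈ S → (x, s) ∈ T := fun x hx s hs =>
    ⟨hs, hx, hbdd _ hs hx⟩
  have hcover : Icc a b ⊆ Prod.fst '' (T ∩ {q | q.2 ≤ p q.1}) ∪
      Prod.fst '' (T ∩ {q | p q.1 ≤ q.2}) := by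
    intro x hx
    obtain ⟨s, hs⟩ := hsec x hx
    rcases le_total s (p x) with h | h
    · exact Or.inl ⟨(x, s), ⟨hmem x hx s hs, h⟩, rfl⟩
    · exact Or.inr ⟨(x, s), ⟨hmem x hx s hs, h⟩, rfl⟩
  obtain ⟨s, hs, h⟩ := ha
  obtain ⟨s', hs', h'⟩ := hb
  obtain ⟨x, hx, ⟨⟨_, s₁⟩, ⟨⟨h₁, -⟩, hs₁⟩, rfl⟩, ⟨⟨_, s₂⟩, ⟨⟨h₂, -⟩, hs₂⟩, rfl⟩⟩ :=
    isPreconnected_closed_iff.1 isPreconnected_Icc _ _ hA hB hcover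
      ⟨a, left_mem_Icc.2 hab, (a, s), ⟨hmem a (left_mem_Icc.2 hab) s hs, h⟩, rfl⟩
      ⟨b, right_mem_Icc.2 hab, (b, s'), ⟨hmem b (right_mem_Icc.2 hab) s' hs', h'⟩, rfl⟩
  exact ⟨_, hx, s₁, s₂, h₁, h₂, hs₁, hs₂⟩

def boundaryPoint (s : ℝ) : ℝ × ℝ := (max s 0, max (-s) 0)

lemma boundaryPoint_of_nonneg {s : ℝ} (hs : 0 ≤ s) : boundaryPoint s = (s, 0) := by
  simp [boundaryPoint, hs]

lemma boundaryPoint_of_nonpos {s : ℝ} (hs : s ≤ 0) : boundaryPoint s = (0, -s) := by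
  simp [boundaryPoint, hs]

lemma boundaryPoint_mem_segment_of_nonneg {s y₁ y₂ : ℝ} (hs : 0 ≤ s) (h₁ : y₁ ≤ s)
    (h₂ : s ≤ y₂) : boundaryPoint s ∈ segment ℝ (y₁, (0 : ℝ)) (y₂, 0) := by
  rw [boundaryPoint_of_nonneg hs, ← Prod.image_mk_segment_left, segment_eq_Icc (h₁.trans h₂)]
  exact mem_image_of_mem _ ⟨h₁, h₂⟩

lemma boundaryPoint_mem_segment_of_nonpos {s σ₁ σ₂ : ℝ} (hs : s ≤ 0) (h₁ : σ₁ ≤ -s)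
    (h₂ : -s ≤ σ₂) : boundaryPoint s ∈ segment ℝ ((0 : ℝ), σ₁) (0, σ₂) := by
  rw [boundaryPoint_of_nonpos hs, ← Prod.image_mk_segment_right, segment_eq_Icc (h₁.trans h₂)]
  exact mem_image_of_mem _ ⟨h₁, h₂⟩

lemma boundaryPoint_mem_convexHull {s σ y : ℝ} (hσ : -σ ≤ s) (hy : s ≤ y) :
    boundaryPoint s ∈ convexHull ℝ {((0 : ℝ), σ), (0, 0), (y, 0)} := by
  rcases le_total 0 s with hs | hs
  · exact segment_subset_convexHull (by simp) (by simp)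
      (boundaryPoint_mem_segment_of_nonneg hs hs hy)
  · exact segment_subset_convexHull (by simp) (by simp)
      (boundaryPoint_mem_segment_of_nonpos hs (neg_nonneg.2 hs) (neg_le.1 hσ))

/-- `p x` is the parameter of the point where the ray from `(x, t)` through `(a, b)` leaves the
quarter plane: through the initial line if `b x ≤ t a`, through the boundary line otherwise. For
`a = 0` the constant `-b`, i.e. the point `(a, b)` itself, keeps `p` continuous at `x = 0`. -/
lemma exists_continuous_foot {a b t : ℝ} (ha : 0 ≤ a) (hb : 0 ≤ b) (hbt : b < t) :
    ∃ p : ℝ → ℝ, Continuous p ∧ ∀ x, 0 ≤ x → -t ≤ p x ∧ p x ≤ t * a / (t - b) ∧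
      (a, b) ∈ segment ℝ (x, t) (boundaryPoint (p x)) := by
  have ht : 0 < t := hb.trans_lt hbt
  have htb : 0 < t - b := sub_pos.2 hbt
  rcases ha.eq_or_lt with rfl | ha
  · refine ⟨fun _ => -b, continuous_const, fun x _ => ⟨by linarith, by simp; linarith, ?_⟩⟩
    rw [boundaryPoint_of_nonpos (neg_nonpos.2 hb), neg_neg]
    exact right_mem_segment _ _ _
  refine ⟨fun x => if b * x ≤ t * a then (t * a - b * x) / (t - b)
    else (t * a - b * x) / (x - a), ?_, fun x hx => ?_⟩
  · refine continuous_if_le (by fun_prop) (by fun_prop) (by fun_prop) ?_ fun x h => by simp [h]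
    refine (by fun_prop : Continuous fun x => t * a - b * x).continuousOn.div (by fun_prop)
      fun x hx => ?_
    have : t * a ≤ b * x := hx
    nlinarith
  dsimp only
  split_ifs with h
  · have hp : 0 ≤ (t * a - b * x) / (t - b) := div_nonneg (by linarith) htb.le
    refine ⟨by linarith, div_le_div_of_nonneg_right (by nlinarith) htb.le, ?_⟩
    rw [boundaryPoint_of_nonneg hp]
    refine ⟨b / t, (t - b) / t, by positivity, by positivity, by field_simp; ring, ?_⟩
    ext <;> simp <;> field_simp
    ring
  · have hxa : 0 < x - a := by nlinarith
    have hx : 0 < x := by linarith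
    have hp : (t * a - b * x) / (x - a) ≤ 0 := div_nonpos_of_nonpos_of_nonneg (by linarith) hxa.le
    refine ⟨?_, hp.trans (by positivity), ?_⟩
    · rw [le_div_iff₀ hxa]; nlinarith
    rw [boundaryPoint_of_nonpos hp]
    refine ⟨a / x, (x - a) / x, by positivity, by positivity, by field_simp; ring, ?_⟩
    ext <;> simp <;> field_simp
    ring

def boundaryPotential (f g : ℝ → ℝ) (s : ℝ) : ℝ :=
  f (boundaryPoint s).1 + g (boundaryPoint s).2

section BoundaryPotential

variable {f g : ℝ → ℝ} {s : ℝ}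

lemma boundaryPotential_of_nonneg (hg : g 0 = 0) (hs : 0 ≤ s) :
    boundaryPotential f g s = f s := by
  simp [boundaryPotential, boundaryPoint_of_nonneg hs, hg]

lemma boundaryPotential_of_nonpos (hf : f 0 = 0) (hs : s ≤ 0) :
    boundaryPotential f g s = g (-s) := by
  simp [boundaryPotential, boundaryPoint_of_nonpos hs, hf]

lemma minimizesOn_of_isMinOn_boundaryPotential (hg : g 0 = 0)
    (hmin : IsMinOn (boundaryPotential f g) univ s) (hs : 0 ≤ s) : MinimizesOn f s := by
  refine ⟨hs, fun y hy => ?_⟩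
  simpa [boundaryPotential_of_nonneg hg, hs, hy] using isMinOn_univ_iff.1 hmin y

lemma minimizesOn_neg_of_isMinOn_boundaryPotential (hf : f 0 = 0)
    (hmin : IsMinOn (boundaryPotential f g) univ s) (hs : s ≤ 0) : MinimizesOn g (-s) := by
  refine ⟨neg_nonneg.2 hs, fun τ hτ => ?_⟩
  have := isMinOn_univ_iff.1 hmin (-τ)
  rwa [boundaryPotential_of_nonpos hf hs, boundaryPotential_of_nonpos hf (neg_nonpos.2 hτ),
    neg_neg] at this

lemma le_of_isMinOn_boundaryPotential (hg : g 0 = 0) {y : ℝ} (hy : LargestMinimizer f y)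
    (hmin : IsMinOn (boundaryPotential f g) univ s) : s ≤ y := by
  rcases le_total s 0 with h | h
  · linarith [hy.1.1]
  · exact hy.2 _ (minimizesOn_of_isMinOn_boundaryPotential hg hmin h)

lemma neg_le_of_isMinOn_boundaryPotential (hf : f 0 = 0) {τ : ℝ} (hτ : LargestMinimizer g τ)
    (hmin : IsMinOn (boundaryPotential f g) univ s) : -τ ≤ s := by
  rcases le_total 0 s with h | h
  · linarith [hτ.1.1]
  · exact neg_le.1 (hτ.2 _ (minimizesOn_neg_of_isMinOn_boundaryPotential hf hmin h))

lemma le_of_isMinOn_boundaryPotential_of_pos (hf : f 0 = 0) (hg : g 0 = 0) {c : ℝ}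
    (hfc : ∀ y, MinimizesOn f y → c ≤ y) (hgpos : ∀ τ, 0 < τ → 0 < g τ)
    (hmin : IsMinOn (boundaryPotential f g) univ s) : c ≤ s := by
  rcases lt_or_ge s 0 with h | h
  · have := isMinOn_univ_iff.1 hmin 0
    rw [boundaryPotential_of_nonpos hf h.le, boundaryPotential_of_nonneg hg le_rfl, hf] at this
    linarith [hgpos (-s) (neg_pos.2 h)]
  · exact hfc s (minimizesOn_of_isMinOn_boundaryPotential hg hmin h)

lemma nonneg_of_isMinOn_boundaryPotential (hf : f 0 = 0) (hg : g 0 = 0) {vf vg : ℝ}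
    (hvf : IsMinValue f vf) (hvg : IsMinValue g vg) (hlt : vf < vg)
    (hmin : IsMinOn (boundaryPotential f g) univ s) : 0 ≤ s := by
  by_contra! hs
  obtain ⟨⟨y, hy, rfl⟩, -⟩ := hvf
  have := isMinOn_univ_iff.1 hmin y
  rw [boundaryPotential_of_nonpos hf hs.le, boundaryPotential_of_nonneg hg hy] at this
  linarith [hvg.2 (-s) (by linarith)]

lemma nonpos_of_isMinOn_boundaryPotential (hf : f 0 = 0) (hg : g 0 = 0) {vf vg : ℝ}
    (hvf : IsMinValue f vf) (hvg : IsMinValue g vg) (hlt : vg < vf)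
    (hmin : IsMinOn (boundaryPotential f g) univ s) : s ≤ 0 := by
  by_contra! hs
  obtain ⟨⟨τ, hτ, rfl⟩, -⟩ := hvg
  have := isMinOn_univ_iff.1 hmin (-τ)
  rw [boundaryPotential_of_nonneg hg hs.le, boundaryPotential_of_nonpos hf (neg_nonpos.2 hτ),
    neg_neg] at this
  linarith [hvf.2 s hs.le]

lemma exists_isMinOn_boundaryPotential (hf : f 0 = 0) (hg : g 0 = 0) {vf vg : ℝ}
    (hvf : IsMinValue f vf) (hvg : IsMinValue g vg) :
    ∃ s, IsMinOn (boundaryPotential f g) univ s := by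
  have key : ∀ s', min vf vg ≤ boundaryPotential f g s' := fun s' => by
    rcases le_total 0 s' with hs | hs
    · rw [boundaryPotential_of_nonneg hg hs]; exact (min_le_left _ _).trans (hvf.2 s' hs)
    · rw [boundaryPotential_of_nonpos hf hs]
      exact (min_le_right _ _).trans (hvg.2 _ (neg_nonneg.2 hs))
  rcases le_total vf vg with h | h
  · obtain ⟨⟨y, hy, hfy⟩, -⟩ := hvf
    refine ⟨y, isMinOn_univ_iff.2 fun s' => ?_⟩
    rw [boundaryPotential_of_nonneg hg hy, hfy, ← min_eq_left h]
    exact key s'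
  · obtain ⟨⟨τ, hτ, hgτ⟩, -⟩ := hvg
    refine ⟨-τ, isMinOn_univ_iff.2 fun s' => ?_⟩
    rw [boundaryPotential_of_nonpos hf (neg_nonpos.2 hτ), neg_neg, hgτ, ← min_eq_right h]
    exact key s'

end BoundaryPotential

section CharTriangle

variable {Fm Gm ys yS τs τS : ℝ → ℝ → ℝ} {x t : ℝ}

lemma convex_charTriangle : Convex ℝ (charTriangle Fm Gm ys yS τs τS x t) := by
  unfold charTriangle
  split_ifs <;> exact convex_convexHull ℝ _

lemma apex_mem_charTriangle : (x, t) ∈ charTriangle Fm Gm ys yS τs τS x t := by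
  unfold charTriangle
  split_ifs with h₀
  · rw [h₀.1]
    exact subset_convexHull ℝ _ (by simp)
  all_goals exact subset_convexHull ℝ _ (by simp)

lemma charTriangle_subset (hx : 0 ≤ x) (ht : 0 ≤ t) (hys : 0 ≤ ys x t) (hyS : 0 ≤ yS x t)
    (hτs : τs x t ∈ Icc 0 t) (hτS : τS x t ∈ Icc 0 t) :
    charTriangle Fm Gm ys yS τs τS x t ⊆ Ici 0 ×ˢ Icc 0 t := by
  unfold charTriangle
  split_ifs with h₀
  · obtain ⟨rfl, -⟩ := h₀
    refine convexHull_min ?_ ((convex_Ici 0).prod (convex_Icc 0 t))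
    simp [insert_subset_iff, ht, hyS]
  all_goals
    refine convexHull_min ?_ ((convex_Ici 0).prod (convex_Icc 0 t))
    simp [insert_subset_iff, hx, ht, hys, hyS, hτs.1, hτs.2, hτS.1, hτS.2]

variable {f g : ℝ → ℝ}

lemma boundaryPoint_mem_charTriangle (hf : f 0 = 0) (hg : g 0 = 0)
    (hFm : IsMinValue f (Fm x t)) (hGm : IsMinValue g (Gm x t))
    (hys : SmallestMinimizer f (ys x t)) (hyS : LargestMinimizer f (yS x t))
    (hτs : SmallestMinimizer g (τs x t)) (hτS : LargestMinimizer g (τS x t)) {s₁ s s₂ : ℝ}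
    (h₁ : IsMinOn (boundaryPotential f g) univ s₁) (h₂ : IsMinOn (boundaryPotential f g) univ s₂)
    (hs₁ : s₁ ≤ s) (hs₂ : s ≤ s₂) : boundaryPoint s ∈ charTriangle Fm Gm ys yS τs τS x t := by
  have hlo := neg_le_of_isMinOn_boundaryPotential hf hτS h₁
  have hhi := le_of_isMinOn_boundaryPotential hg hyS h₂
  unfold charTriangle
  split_ifs with h₀ hFG hGF
  · obtain ⟨rfl, hFG⟩ := h₀
    have h0 := nonneg_of_isMinOn_boundaryPotential hf hg hFm hGm hFG h₁
    exact segment_subset_convexHull (by simp) (by simp)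
      (boundaryPoint_mem_segment_of_nonneg (h0.trans hs₁) (h0.trans hs₁) (hs₂.trans hhi))
  · have h0 := nonneg_of_isMinOn_boundaryPotential hf hg hFm hGm hFG h₁
    have hys₁ := hys.2 _ (minimizesOn_of_isMinOn_boundaryPotential hg h₁ h0)
    exact segment_subset_convexHull (by simp) (by simp)
      (boundaryPoint_mem_segment_of_nonneg (h0.trans hs₁) (hys₁.trans hs₁) (hs₂.trans hhi))
  · have h0 := nonpos_of_isMinOn_boundaryPotential hf hg hFm hGm hGF h₂
    have hτs₂ := hτs.2 _ (minimizesOn_neg_of_isMinOn_boundaryPotential hf h₂ h0)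
    exact segment_subset_convexHull (by simp) (by simp)
      (boundaryPoint_mem_segment_of_nonpos (hs₂.trans h0) (by linarith) (by linarith) :
        boundaryPoint s ∈ segment ℝ ((0 : ℝ), τs x t) (0, τS x t))
  · refine convexHull_mono ?_ (boundaryPoint_mem_convexHull (hlo.trans hs₁) (hs₂.trans hhi))
    simp [insert_subset_iff]

lemma boundaryPoint_mem_charTriangle_zero (hf : f 0 = 0) (hg : g 0 = 0)
    (hFm : IsMinValue f (Fm 0 t)) (hGm : IsMinValue g (Gm 0 t))
    (hyS : LargestMinimizer f (yS 0 t)) (hτs : SmallestMinimizer g (τs 0 t)) {s s₂ : ℝ}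
    (h₂ : IsMinOn (boundaryPotential f g) univ s₂) (hs : -t ≤ s) (hs₂ : s ≤ s₂) :
    boundaryPoint s ∈ charTriangle Fm Gm ys yS τs τS 0 t := by
  have hhi := le_of_isMinOn_boundaryPotential hg hyS h₂
  unfold charTriangle
  split_ifs with h₀ hFG hGF
  · exact boundaryPoint_mem_convexHull hs (hs₂.trans hhi)
  · exact absurd ⟨rfl, hFG⟩ h₀
  · have h0 := nonpos_of_isMinOn_boundaryPotential hf hg hFm hGm hGF h₂
    have hτs₂ := hτs.2 _ (minimizesOn_neg_of_isMinOn_boundaryPotential hf h₂ h0)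
    exact segment_subset_convexHull (by simp) (by simp)
      (boundaryPoint_mem_segment_of_nonpos (hs₂.trans h0) (by linarith) (by linarith) :
        boundaryPoint s ∈ segment ℝ ((0 : ℝ), τs 0 t) (0, t))
  · refine convexHull_mono ?_ (boundaryPoint_mem_convexHull hs (hs₂.trans hhi))
    simp [insert_subset_iff]

end CharTriangle

section Potentials

variable {ρ0 u0 ρb ub : ℝ → ℝ} {x t : ℝ}

lemma Fpot_zero : Fpot ρ0 u0 0 x t = 0 := intervalIntegral.integral_same

lemma Gpot_zero : Gpot ρb ub 0 x t = 0 := intervalIntegral.integral_same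

lemma intervalIntegrable_Fpot_integrand {M K : ℝ} (hu0 : Measurable u0)
    (hM : ∀ η, 0 ≤ η → |u0 η| ≤ M) (ht : 0 ≤ t) (hK : 0 ≤ K)
    (hρ0 : IntervalIntegrable ρ0 volume 0 K) :
    IntervalIntegrable (fun η => (t * u0 η + η - x) * ρ0 η) volume 0 K := by
  refine intervalIntegrable_mul_of_abs_le hK hρ0 (by fun_prop) (C := t * M + K + |x|)
    fun η hη => abs_le.2 ⟨?_, ?_⟩
  · have := mul_le_mul_of_nonneg_left (neg_le_of_abs_le (hM η hη.1)) ht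
    linarith [hη.1, le_abs_self x]
  · have := mul_le_mul_of_nonneg_left (le_of_abs_le (hM η hη.1)) ht
    linarith [hη.2, neg_abs_le x]

lemma intervalIntegrable_Gpot_integrand {M K : ℝ} (hub : Measurable ub)
    (hM : ∀ η, 0 ≤ η → |ub η| ≤ M) (ht : 0 ≤ t) (hK : 0 ≤ K)
    (hρb : IntervalIntegrable (fun η => ρb η * ub η) volume 0 K) :
    IntervalIntegrable (fun η => (x - ub η * (t - η)) * (ρb η * ub η)) volume 0 K := by
  refine intervalIntegrable_mul_of_abs_le hK hρb (by fun_prop) (C := |x| + M * (t + K))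
    fun η hη => ?_
  have hdist : |t - η| ≤ t + K := abs_sub_le_iff.2 ⟨by linarith [hη.1], by linarith [hη.2]⟩
  calc |x - ub η * (t - η)| ≤ |x| + |ub η| * |t - η| := (abs_sub _ _).trans_eq (by rw [abs_mul])
    _ ≤ |x| + M * (t + K) :=
      add_le_add_right (mul_le_mul (hM η hη.1) hdist (abs_nonneg _)
        ((abs_nonneg _).trans (hM η hη.1))) _

lemma Fpot_eq_add {y x' : ℝ}
    (hint : IntervalIntegrable (fun η => (t * u0 η + η - x') * ρ0 η) volume 0 y)
    (hρ : IntervalIntegrable ρ0 volume 0 y) :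
    Fpot ρ0 u0 y x t = Fpot ρ0 u0 y x' t + (x' - x) * ∫ η in 0..y, ρ0 η := by
  rw [Fpot, Fpot, ← intervalIntegral.integral_const_mul,
    ← intervalIntegral.integral_add hint (hρ.const_mul _)]
  exact intervalIntegral.integral_congr fun η _ => by ring

lemma Gpot_eq_add {τ x' : ℝ}
    (hint : IntervalIntegrable (fun η => (x' - ub η * (t - η)) * (ρb η * ub η)) volume 0 τ)
    (hρ : IntervalIntegrable (fun η => ρb η * ub η) volume 0 τ) :
    Gpot ρb ub τ x t = Gpot ρb ub τ x' t + (x - x') * ∫ η in 0..τ, ρb η * ub η := by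
  rw [Gpot, Gpot, ← intervalIntegral.integral_const_mul,
    ← intervalIntegral.integral_add hint (hρ.const_mul _)]
  exact intervalIntegral.integral_congr fun η _ => by ring

lemma continuous_boundaryPotential_Fpot_Gpot
    (hF : ∀ x K, 0 ≤ K → IntervalIntegrable (fun η => (t * u0 η + η - x) * ρ0 η) volume 0 K)
    (hρ0 : ∀ K, 0 ≤ K → IntervalIntegrable ρ0 volume 0 K)
    (hG : ∀ x K, 0 ≤ K →
      IntervalIntegrable (fun η => (x - ub η * (t - η)) * (ρb η * ub η)) volume 0 K)
    (hρb : ∀ K, 0 ≤ K → IntervalIntegrable (fun η => ρb η * ub η) volume 0 K) :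
    Continuous fun q : ℝ × ℝ =>
      boundaryPotential (fun y => Fpot ρ0 u0 y q.1 t) (fun τ => Gpot ρb ub τ q.1 t) q.2 := by
  have hFx : ∀ x s, Fpot ρ0 u0 (max s 0) x t =
      Fpot ρ0 u0 (max s 0) 0 t + (0 - x) * ∫ η in 0..max s 0, ρ0 η := fun x s =>
    Fpot_eq_add (hF 0 _ (le_max_right s 0)) (hρ0 _ (le_max_right s 0))
  have hGx : ∀ x s, Gpot ρb ub (max (-s) 0) x t =
      Gpot ρb ub (max (-s) 0) 0 t + (x - 0) * ∫ η in 0..max (-s) 0, ρb η * ub η := fun x s =>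
    Gpot_eq_add (hG 0 _ (le_max_right (-s) 0)) (hρb _ (le_max_right (-s) 0))
  have h₁ : Continuous fun s => Fpot ρ0 u0 (max s 0) 0 t := continuous_integral_max (hF 0)
  have h₂ := continuous_integral_max hρ0
  have h₃ : Continuous fun s => Gpot ρb ub (max (-s) 0) 0 t :=
    (continuous_integral_max (hG 0)).comp continuous_neg
  have h₄ : Continuous fun s => ∫ η in 0..max (-s) 0, ρb η * ub η :=
    (continuous_integral_max hρb).comp continuous_neg
  have h : Continuous fun q : ℝ × ℝ =>
      (Fpot ρ0 u0 (max q.2 0) 0 t + (0 - q.1) * ∫ η in 0..max q.2 0, ρ0 η) +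
      (Gpot ρb ub (max (-q.2) 0) 0 t + (q.1 - 0) * ∫ η in 0..max (-q.2) 0, ρb η * ub η) :=
    ((h₁.comp continuous_snd).add ((continuous_const.sub continuous_fst).mul
      (h₂.comp continuous_snd))).add ((h₃.comp continuous_snd).add
      ((continuous_fst.sub continuous_const).mul (h₄.comp continuous_snd)))
  refine h.congr fun q => ?_
  rw [boundaryPotential, boundaryPoint, hFx q.1 q.2, hGx q.1 q.2]

lemma le_of_minimizesOn_Gpot {τ : ℝ}
    (hint : ∀ K, 0 ≤ K →
      IntervalIntegrable (fun η => (x - ub η * (t - η)) * (ρb η * ub η)) volume 0 K)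
    (hρb : ∀ η, 0 ≤ η → 0 < ρb η) (hub : ∀ η, 0 ≤ η → 0 < ub η) (hx : 0 ≤ x) (ht : 0 ≤ t)
    (hτ : MinimizesOn (fun τ => Gpot ρb ub τ x t) τ) : τ ≤ t := by
  by_contra! h
  refine (hτ.2 t ht).not_gt (integral_lt_integral_of_pos_on (hint τ hτ.1) ht h fun η hη => ?_)
  have hη0 : 0 ≤ η := ht.trans hη.1.le
  have hubη := hub η hη0
  exact mul_pos (by nlinarith [hη.1]) (mul_pos (hρb η hη0) hubη)

lemma Gpot_pos {τ M : ℝ}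
    (hint : IntervalIntegrable (fun η => (x - ub η * (t - η)) * (ρb η * ub η)) volume 0 τ)
    (hρb : ∀ η, 0 ≤ η → 0 < ρb η) (hub : ∀ η, 0 ≤ η → 0 < ub η)
    (hM : ∀ η, 0 ≤ η → |ub η| ≤ M) (ht : 0 ≤ t) (hx : t * M < x) (hτ : 0 < τ) :
    0 < Gpot ρb ub τ x t := by
  have h := integral_lt_integral_of_pos_on hint le_rfl hτ fun η hη => by
    have hη0 : 0 ≤ η := hη.1.le
    have hubη := hub η hη0
    have hubM := mul_le_mul_of_nonneg_left (le_of_abs_le (hM η hη0)) ht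
    exact mul_pos (by nlinarith [mul_pos hubη hη.1]) (mul_pos (hρb η hη0) hubη)
  simpa only [intervalIntegral.integral_same, Gpot] using h

lemma le_of_minimizesOn_Fpot {y M : ℝ}
    (hint : ∀ K, 0 ≤ K → IntervalIntegrable (fun η => (t * u0 η + η - x) * ρ0 η) volume 0 K)
    (hρ0 : ∀ η, 0 ≤ η → 0 < ρ0 η) (hM : ∀ η, 0 ≤ η → |u0 η| ≤ M) (ht : 0 ≤ t)
    (hxM : 0 ≤ x + t * M) (hy : MinimizesOn (fun y => Fpot ρ0 u0 y x t) y) : y ≤ x + t * M := by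
  by_contra! h
  refine (hy.2 _ hxM).not_gt (integral_lt_integral_of_pos_on (hint y hy.1) hxM h fun η hη => ?_)
  have hη0 : 0 ≤ η := hxM.trans hη.1.le
  have := mul_le_mul_of_nonneg_left (neg_le_of_abs_le (hM η hη0)) ht
  exact mul_pos (by linarith [hη.1]) (hρ0 η hη0)

lemma sub_le_of_minimizesOn_Fpot {y M : ℝ}
    (hint : ∀ K, 0 ≤ K → IntervalIntegrable (fun η => (t * u0 η + η - x) * ρ0 η) volume 0 K)
    (hρ0 : ∀ η, 0 ≤ η → 0 < ρ0 η) (hM : ∀ η, 0 ≤ η → |u0 η| ≤ M) (ht : 0 ≤ t)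
    (hy : MinimizesOn (fun y => Fpot ρ0 u0 y x t) y) : x - t * M ≤ y := by
  by_contra! h
  have hxM : 0 ≤ x - t * M := hy.1.trans h.le
  refine (hy.2 _ hxM).not_gt (integral_lt_integral_of_neg_on (hint _ hxM) hy.1 h fun η hη => ?_)
  have hη0 : 0 ≤ η := hy.1.trans hη.1.le
  have := mul_le_mul_of_nonneg_left (le_of_abs_le (hM η hη0)) ht
  exact mul_neg_of_neg_of_pos (by linarith [hη.2]) (hρ0 η hη0)

end Potentials

theorem subset_iUnion_charTriangle {F G Fm Gm ys yS τs τS : ℝ → ℝ → ℝ} {t C : ℝ} (hC : 0 ≤ C)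
    (hF0 : ∀ x, F x 0 = 0) (hG0 : ∀ x, G x 0 = 0)
    (hcont : Continuous fun q : ℝ × ℝ => boundaryPotential (F q.1) (G q.1) q.2)
    (hFm : ∀ x, 0 ≤ x → IsMinValue (F x) (Fm x t))
    (hGm : ∀ x, 0 ≤ x → IsMinValue (G x) (Gm x t))
    (hys : ∀ x, 0 ≤ x → SmallestMinimizer (F x) (ys x t))
    (hyS : ∀ x, 0 ≤ x → LargestMinimizer (F x) (yS x t))
    (hτs : ∀ x, 0 ≤ x → SmallestMinimizer (G x) (τs x t))
    (hτS : ∀ x, 0 ≤ x → LargestMinimizer (G x) (τS x t))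
    (hτSt : ∀ x, 0 ≤ x → τS x t ≤ t)
    (hFle : ∀ x y, 0 ≤ x → MinimizesOn (F x) y → y ≤ x + C)
    (hFge : ∀ x y, C < x → MinimizesOn (F x) y → x - C ≤ y)
    (hGpos : ∀ x τ, C < x → 0 < τ → 0 < G x τ) :
    Ici 0 ×ˢ Ico 0 t ⊆ ⋃ x ∈ Ici (0 : ℝ), charTriangle Fm Gm ys yS τs τS x t := by
  rintro ⟨a, b⟩ hab
  obtain ⟨ha, hb, hbt⟩ : 0 ≤ a ∧ 0 ≤ b ∧ b < t := by simpa using hab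
  set S := {q : ℝ × ℝ | IsMinOn (boundaryPotential (F q.1) (G q.1)) univ q.2}
  have hS : IsClosed S := isClosed_setOf_isMinOn (f := fun x => boundaryPotential (F x) (G x)) hcont
  have hex : ∀ x, 0 ≤ x → ∃ s, (x, s) ∈ S := fun x hx =>
    exists_isMinOn_boundaryPotential (hF0 x) (hG0 x) (hFm x hx) (hGm x hx)
  have hlo : ∀ x s, 0 ≤ x → (x, s) ∈ S → -t ≤ s := fun x s hx hs => by
    linarith [neg_le_of_isMinOn_boundaryPotential (hF0 x) (hτS x hx) hs, hτSt x hx]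
  have hhi : ∀ x s, 0 ≤ x → (x, s) ∈ S → s ≤ x + C := fun x s hx hs =>
    (le_of_isMinOn_boundaryPotential (hG0 x) (hyS x hx) hs).trans (hFle x _ hx (hyS x hx).1)
  have hlarge : ∀ x s, C < x → (x, s) ∈ S → x - C ≤ s := fun x s hx hs =>
    le_of_isMinOn_boundaryPotential_of_pos (hF0 x) (hG0 x) (hFge x · hx) (hGpos x · hx) hs
  obtain ⟨p, hp, hpx⟩ := exists_continuous_foot ha hb hbt
  suffices ∃ x, 0 ≤ x ∧ boundaryPoint (p x) ∈ charTriangle Fm Gm ys yS τs τS x t by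
    obtain ⟨x, hx, hmem⟩ := this
    exact mem_biUnion hx
      (convex_charTriangle.segment_subset apex_mem_charTriangle hmem (hpx x hx).2.2)
  by_cases h0 : ∃ s, (0, s) ∈ S ∧ p 0 ≤ s
  · obtain ⟨s, hs, h⟩ := h0
    exact ⟨0, le_rfl, boundaryPoint_mem_charTriangle_zero (hF0 0) (hG0 0) (hFm 0 le_rfl)
      (hGm 0 le_rfl) (hyS 0 le_rfl) (hτs 0 le_rfl) hs (hpx 0 le_rfl).1 h⟩
  push Not at h0
  set K := t * a / (t - b) + C + 1
  have hK : C < K := by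
    have : 0 ≤ t * a / (t - b) := div_nonneg (by nlinarith) (by linarith)
    linarith
  obtain ⟨x, hx, s₁, s₂, h₁, h₂, hs₁, hs₂⟩ := exists_crossing hS hp (a := 0) (b := K)
    (lo := -t) (hi := K + C) (by linarith) (fun x hx => hex x hx.1)
    (fun q hq hq₁ => ⟨hlo _ _ hq₁.1 hq, by linarith [hhi _ _ hq₁.1 hq, hq₁.2]⟩)
    (by obtain ⟨s, hs⟩ := hex 0 le_rfl; exact ⟨s, hs, (h0 s hs).le⟩)
    (by
      obtain ⟨s, hs⟩ := hex K (by linarith)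
      exact ⟨s, hs, by linarith [hlarge K s hK hs, (hpx K (by linarith)).2.1]⟩)
  exact ⟨x, hx.1, boundaryPoint_mem_charTriangle (hF0 x) (hG0 x) (hFm x hx.1) (hGm x hx.1)
    (hys x hx.1) (hyS x hx.1) (hτs x hx.1) (hτS x hx.1) h₁ h₂ hs₁ hs₂⟩

theorem iUnion_charTriangle_eq {F G Fm Gm ys yS τs τS : ℝ → ℝ → ℝ} {t C : ℝ} (ht : 0 ≤ t)
    (hC : 0 ≤ C) (hF0 : ∀ x, F x 0 = 0) (hG0 : ∀ x, G x 0 = 0)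
    (hcont : Continuous fun q : ℝ × ℝ => boundaryPotential (F q.1) (G q.1) q.2)
    (hFm : ∀ x, 0 ≤ x → IsMinValue (F x) (Fm x t))
    (hGm : ∀ x, 0 ≤ x → IsMinValue (G x) (Gm x t))
    (hys : ∀ x, 0 ≤ x → SmallestMinimizer (F x) (ys x t))
    (hyS : ∀ x, 0 ≤ x → LargestMinimizer (F x) (yS x t))
    (hτs : ∀ x, 0 ≤ x → SmallestMinimizer (G x) (τs x t))
    (hτS : ∀ x, 0 ≤ x → LargestMinimizer (G x) (τS x t))
    (hτSt : ∀ x, 0 ≤ x → τS x t ≤ t)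
    (hFle : ∀ x y, 0 ≤ x → MinimizesOn (F x) y → y ≤ x + C)
    (hFge : ∀ x y, C < x → MinimizesOn (F x) y → x - C ≤ y)
    (hGpos : ∀ x τ, C < x → 0 < τ → 0 < G x τ) :
    ⋃ x ∈ Ici (0 : ℝ), charTriangle Fm Gm ys yS τs τS x t = Ici 0 ×ˢ Icc 0 t := by
  refine Subset.antisymm (iUnion₂_subset fun x hx => charTriangle_subset hx ht (hys x hx).1.1
    (hyS x hx).1.1 ⟨(hτs x hx).1.1, ((hτs x hx).2 _ (hτS x hx).1).trans (hτSt x hx)⟩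
    ⟨(hτS x hx).1.1, hτSt x hx⟩) ?_
  rintro ⟨a, b⟩ ⟨ha, hb, hbt⟩
  rcases hbt.lt_or_eq with hbt | rfl
  · exact subset_iUnion_charTriangle hC hF0 hG0 hcont hFm hGm hys hyS hτs hτS hτSt hFle hFge
      hGpos ⟨ha, hb, hbt⟩
  · exact mem_biUnion ha apex_mem_charTriangle

theorem stmt12
    (ρ0 u0 ρb ub : ℝ → ℝ)
    (hρ0meas : Measurable ρ0) (hu0meas : Measurable u0)
    (hρbmeas : Measurable ρb) (hubmeas : Measurable ub)
    (hρ0pos : ∀ η, 0 ≤ η → 0 < ρ0 η)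
    (hρbpos : ∀ η, 0 ≤ η → 0 < ρb η)
    (hubpos : ∀ η, 0 ≤ η → 0 < ub η)
    (hρ0loc : ∀ K : ℝ, ∃ M : ℝ, ∀ η ∈ Set.Icc (0:ℝ) K, ρ0 η ≤ M)
    (hρbloc : ∀ K : ℝ, ∃ M : ℝ, ∀ η ∈ Set.Icc (0:ℝ) K, ρb η ≤ M)
    (hu0bdd : ∃ M : ℝ, ∀ η, 0 ≤ η → |u0 η| ≤ M)
    (hubbdd : ∃ M : ℝ, ∀ η, 0 ≤ η → |ub η| ≤ M)
    (Fm Gm : ℝ → ℝ → ℝ)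
    (hFm : ∀ x t, 0 ≤ x → 0 ≤ t → IsMinValue (fun y => Fpot ρ0 u0 y x t) (Fm x t))
    (hGm : ∀ x t, 0 ≤ x → 0 ≤ t → IsMinValue (fun τ => Gpot ρb ub τ x t) (Gm x t))
    (ys yS τs τS : ℝ → ℝ → ℝ)
    (hys : ∀ x t, 0 ≤ x → 0 ≤ t → SmallestMinimizer (fun y => Fpot ρ0 u0 y x t) (ys x t))
    (hyS : ∀ x t, 0 ≤ x → 0 ≤ t → LargestMinimizer (fun y => Fpot ρ0 u0 y x t) (yS x t))
    (hτs : ∀ x t, 0 ≤ x → 0 ≤ t → SmallestMinimizer (fun τ => Gpot ρb ub τ x t) (τs x t))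
    (hτS : ∀ x t, 0 ≤ x → 0 ≤ t → LargestMinimizer (fun τ => Gpot ρb ub τ x t) (τS x t))
    (t₀ : ℝ) (ht₀ : 0 < t₀) :
    (⋃ x ∈ Set.Ici (0:ℝ), charTriangle Fm Gm ys yS τs τS x t₀) =
      Set.Ici (0:ℝ) ×ˢ Set.Icc (0:ℝ) t₀ := by
  obtain ⟨Mu, hMu⟩ := hu0bdd
  obtain ⟨Mb, hMb⟩ := hubbdd
  have hu0 : ∀ η, 0 ≤ η → |u0 η| ≤ max Mu Mb := fun η hη => (hMu η hη).trans (le_max_left _ _)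
  have hub : ∀ η, 0 ≤ η → |ub η| ≤ max Mu Mb := fun η hη => (hMb η hη).trans (le_max_right _ _)
  have hM : 0 ≤ t₀ * max Mu Mb := mul_nonneg ht₀.le ((abs_nonneg _).trans (hu0 0 le_rfl))
  have hρ0 : ∀ K, 0 ≤ K → IntervalIntegrable ρ0 volume 0 K := fun K =>
    intervalIntegrable_of_pos_of_le hρ0meas hρ0pos hρ0loc
  have hρb : ∀ K, 0 ≤ K → IntervalIntegrable (fun η => ρb η * ub η) volume 0 K := fun K hK => by
    simpa only [mul_comm] using intervalIntegrable_mul_of_abs_le hK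
      (intervalIntegrable_of_pos_of_le hρbmeas hρbpos hρbloc hK) hubmeas fun η hη => hub η hη.1
  have hF : ∀ x K, 0 ≤ K → IntervalIntegrable (fun η => (t₀ * u0 η + η - x) * ρ0 η) volume 0 K :=
    fun x K hK => intervalIntegrable_Fpot_integrand hu0meas hu0 ht₀.le hK (hρ0 K hK)
  have hG : ∀ x K, 0 ≤ K →
      IntervalIntegrable (fun η => (x - ub η * (t₀ - η)) * (ρb η * ub η)) volume 0 K :=
    fun x K hK => intervalIntegrable_Gpot_integrand hubmeas hub ht₀.le hK (hρb K hK)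
  exact iUnion_charTriangle_eq (F := fun x y => Fpot ρ0 u0 y x t₀)
    (G := fun x τ => Gpot ρb ub τ x t₀) ht₀.le hM (fun _ => Fpot_zero) (fun _ => Gpot_zero)
    (continuous_boundaryPotential_Fpot_Gpot hF hρ0 hG hρb) (fun x hx => hFm x t₀ hx ht₀.le)
    (fun x hx => hGm x t₀ hx ht₀.le) (fun x hx => hys x t₀ hx ht₀.le)
    (fun x hx => hyS x t₀ hx ht₀.le) (fun x hx => hτs x t₀ hx ht₀.le)
    (fun x hx => hτS x t₀ hx ht₀.le)
    (fun x hx => le_of_minimizesOn_Gpot (hG x) hρbpos hubpos hx ht₀.le (hτS x t₀ hx ht₀.le).1)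
    (fun x y hx hy => le_of_minimizesOn_Fpot (hF x) hρ0pos hu0 ht₀.le (by positivity) hy)
    (fun x y _ hy => sub_le_of_minimizesOn_Fpot (hF x) hρ0pos hu0 ht₀.le hy)
    (fun x τ hx hτ => Gpot_pos (hG x τ hτ.le) hρbpos hubpos hub ht₀.le hx hτ)
end

section
/- Let x′, x″ ≥ 0 and t′, t″ > 0 be arbitrary, let τ′ be any minimizer of τ ↦ G(τ,x′,t′) over [0,∞) and let τ″ be any minimizer of τ ↦ G(τ,x″,t″) over [0,∞). Then (x″ − x′)·∫_{τ′}^{τ″} ρ_b(η) u_b(η) dη ≤ (t″ − t′)·∫_{τ′}^{τ″} ρ_b(η) u_b(η)² dη, where the integrals are oriented (i.e., ∫_{τ′}^{τ″} = −∫_{τ″}^{τ′} if τ″ < τ′). In particular, if t′ < t″ and τ′ < τ″, then (x″ − x′)/(t″ − t′) ≤ (∫_{τ′}^{τ″} ρ_b u_b² dη)/(∫_{τ′}^{τ″} ρ_b u_b dη). -/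
open MeasureTheory Set Filter

/-!
Splitting off the constant term, `G(τ, x, t) = x ∫₀^τ ρ_b u_b - t ∫₀^τ ρ_b u_b² + ∫₀^τ η ρ_b u_b²`,
so `G(τ'', x, t) - G(τ', x, t)` is affine in `(x, t)` with linear part
`x ∫_{τ'}^{τ''} ρ_b u_b - t ∫_{τ'}^{τ''} ρ_b u_b²`. Minimality of `τ'` makes this difference
nonnegative at `(x', t')`, minimality of `τ''` makes it nonpositive at `(x'', t'')`; subtracting the
two inequalities cancels the constant term and gives the claim.
-/

lemma intervalIntegrable_of_abs_le {f : ℝ → ℝ} {a b M : ℝ} (hf : Measurable f)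
    (hM : ∀ η ∈ uIcc a b, |f η| ≤ M) : IntervalIntegrable f volume a b := by
  rw [intervalIntegrable_iff]
  refine Measure.integrableOn_of_bounded (M := M) measure_Ioc_lt_top.ne
    hf.aestronglyMeasurable ?_
  filter_upwards [ae_restrict_mem measurableSet_uIoc] with η hη
  exact hM η (uIoc_subset_uIcc hη)

lemma intervalIntegrable_mul_pow {ρ u : ℝ → ℝ} (hρ : Measurable ρ) (hu : Measurable u)
    (hρpos : ∀ η, 0 ≤ η → 0 < ρ η) (hρloc : ∀ K : ℝ, ∃ M : ℝ, ∀ η ∈ Icc (0:ℝ) K, ρ η ≤ M)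
    (hubdd : ∃ M : ℝ, ∀ η, 0 ≤ η → |u η| ≤ M) (n : ℕ) {τ : ℝ} (hτ : 0 ≤ τ) :
    IntervalIntegrable (fun η => ρ η * u η ^ n) volume 0 τ := by
  obtain ⟨Mρ, hMρ⟩ := hρloc τ
  obtain ⟨Mu, hMu⟩ := hubdd
  refine intervalIntegrable_of_abs_le (M := Mρ * Mu ^ n) (hρ.mul (hu.pow_const n)) ?_
  intro η hη
  rw [uIcc_of_le hτ] at hη
  have hρη := hρpos η hη.1
  rw [abs_mul, abs_pow, abs_of_pos hρη]
  gcongr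
  · exact (hρη.trans_le (hMρ η hη)).le
  · exact hMρ η hη
  · exact hMu η hη.1

lemma Gpot_eq {ρb ub : ℝ → ℝ} {τ : ℝ}
    (hg : IntervalIntegrable (fun η => ρb η * ub η) volume 0 τ)
    (hh : IntervalIntegrable (fun η => ρb η * ub η ^ 2) volume 0 τ) (x t : ℝ) :
    Gpot ρb ub τ x t = x * (∫ η in 0..τ, ρb η * ub η) - t * (∫ η in 0..τ, ρb η * ub η ^ 2)
      + ∫ η in 0..τ, η * (ρb η * ub η ^ 2) := by
  have hsplit : (fun η => (x - ub η * (t - η)) * (ρb η * ub η)) =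
      fun η => x * (ρb η * ub η) - t * (ρb η * ub η ^ 2) + η * (ρb η * ub η ^ 2) := by
    funext η; ring
  rw [Gpot, hsplit,
    intervalIntegral.integral_add ((hg.const_mul x).sub (hh.const_mul t))
      (hh.continuousOn_mul (g := fun η => η) continuousOn_id),
    intervalIntegral.integral_sub (hg.const_mul x) (hh.const_mul t),
    intervalIntegral.integral_const_mul, intervalIntegral.integral_const_mul]

lemma mul_integral_le_of_minimizesOn_Gpot {ρb ub : ℝ → ℝ}
    (hg : ∀ τ, 0 ≤ τ → IntervalIntegrable (fun η => ρb η * ub η) volume 0 τ)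
    (hh : ∀ τ, 0 ≤ τ → IntervalIntegrable (fun η => ρb η * ub η ^ 2) volume 0 τ)
    {x' x'' t' t'' τ' τ'' : ℝ}
    (hτ' : MinimizesOn (fun τ => Gpot ρb ub τ x' t') τ')
    (hτ'' : MinimizesOn (fun τ => Gpot ρb ub τ x'' t'') τ'') :
    (x'' - x') * (∫ η in τ'..τ'', ρb η * ub η) ≤
      (t'' - t') * (∫ η in τ'..τ'', ρb η * ub η ^ 2) := by
  have h' : Gpot ρb ub τ' x' t' ≤ Gpot ρb ub τ'' x' t' := hτ'.2 τ'' hτ''.1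
  have h'' : Gpot ρb ub τ'' x'' t'' ≤ Gpot ρb ub τ' x'' t'' := hτ''.2 τ' hτ'.1
  rw [Gpot_eq (hg τ' hτ'.1) (hh τ' hτ'.1), Gpot_eq (hg τ'' hτ''.1) (hh τ'' hτ''.1)] at h' h''
  rw [← intervalIntegral.integral_interval_sub_left (hg τ'' hτ''.1) (hg τ' hτ'.1),
    ← intervalIntegral.integral_interval_sub_left (hh τ'' hτ''.1) (hh τ' hτ'.1)]
  linear_combination h' + h''

theorem stmt13_general
    (ρb ub : ℝ → ℝ)
    (hρbmeas : Measurable ρb) (hubmeas : Measurable ub)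
    (hρbpos : ∀ η, 0 ≤ η → 0 < ρb η)
    (hubpos : ∀ η, 0 ≤ η → 0 < ub η)
    (hρbloc : ∀ K : ℝ, ∃ M : ℝ, ∀ η ∈ Set.Icc (0:ℝ) K, ρb η ≤ M)
    (hubbdd : ∃ M : ℝ, ∀ η, 0 ≤ η → |ub η| ≤ M)
    (x' x'' t' t'' τ' τ'' : ℝ)
    (hτ' : MinimizesOn (fun τ => Gpot ρb ub τ x' t') τ')
    (hτ'' : MinimizesOn (fun τ => Gpot ρb ub τ x'' t'') τ'') :
    (x'' - x') * (∫ η in τ'..τ'', ρb η * ub η) ≤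
      (t'' - t') * (∫ η in τ'..τ'', ρb η * ub η ^ 2) ∧
    (t' < t'' → τ' < τ'' →
      (x'' - x') / (t'' - t') ≤
        (∫ η in τ'..τ'', ρb η * ub η ^ 2) / (∫ η in τ'..τ'', ρb η * ub η)) := by
  have hg (τ : ℝ) (hτ : 0 ≤ τ) : IntervalIntegrable (fun η => ρb η * ub η) volume 0 τ := by
    simpa only [pow_one] using intervalIntegrable_mul_pow hρbmeas hubmeas hρbpos hρbloc hubbdd 1 hτ
  have hh (τ : ℝ) (hτ : 0 ≤ τ) : IntervalIntegrable (fun η => ρb η * ub η ^ 2) volume 0 τ :=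
    intervalIntegrable_mul_pow hρbmeas hubmeas hρbpos hρbloc hubbdd 2 hτ
  have hmain := mul_integral_le_of_minimizesOn_Gpot hg hh hτ' hτ''
  refine ⟨hmain, fun ht hτ => ?_⟩
  have hA : 0 < ∫ η in τ'..τ'', ρb η * ub η :=
    intervalIntegral.intervalIntegral_pos_of_pos_on ((hg τ' hτ'.1).symm.trans (hg τ'' hτ''.1))
      (fun η hη => mul_pos (hρbpos η (hτ'.1.trans hη.1.le)) (hubpos η (hτ'.1.trans hη.1.le))) hτ
  rw [div_le_div_iff₀ (sub_pos.2 ht) hA]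
  linarith

theorem stmt13
    (ρ0 u0 ρb ub : ℝ → ℝ)
    (hρ0meas : Measurable ρ0) (hu0meas : Measurable u0)
    (hρbmeas : Measurable ρb) (hubmeas : Measurable ub)
    (hρ0pos : ∀ η, 0 ≤ η → 0 < ρ0 η)
    (hρbpos : ∀ η, 0 ≤ η → 0 < ρb η)
    (hubpos : ∀ η, 0 ≤ η → 0 < ub η)
    (hρ0loc : ∀ K : ℝ, ∃ M : ℝ, ∀ η ∈ Set.Icc (0:ℝ) K, ρ0 η ≤ M)
    (hρbloc : ∀ K : ℝ, ∃ M : ℝ, ∀ η ∈ Set.Icc (0:ℝ) K, ρb η ≤ M)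
    (hu0bdd : ∃ M : ℝ, ∀ η, 0 ≤ η → |u0 η| ≤ M)
    (hubbdd : ∃ M : ℝ, ∀ η, 0 ≤ η → |ub η| ≤ M)
    (x' x'' t' t'' τ' τ'' : ℝ)
    (hx' : 0 ≤ x') (hx'' : 0 ≤ x'') (ht' : 0 < t') (ht'' : 0 < t'')
    (hτ' : MinimizesOn (fun τ => Gpot ρb ub τ x' t') τ')
    (hτ'' : MinimizesOn (fun τ => Gpot ρb ub τ x'' t'') τ'') :
    (x'' - x') * (∫ η in τ'..τ'', ρb η * ub η) ≤
      (t'' - t') * (∫ η in τ'..τ'', ρb η * ub η ^ 2) ∧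
    (t' < t'' → τ' < τ'' →
      (x'' - x') / (t'' - t') ≤
        (∫ η in τ'..τ'', ρb η * ub η ^ 2) / (∫ η in τ'..τ'', ρb η * ub η)) :=
  stmt13_general ρb ub hρbmeas hubmeas hρbpos hubpos hρbloc hubbdd x' x'' t' t'' τ' τ'' hτ' hτ''
end

section
/- Fix x > 0 and let 0 < t₁ < t₂. For any two points t < t′ in [t₁,t₂] the inequalities (t′ − t)·q(x,t′) ≤ μ(x,t′) − μ(x,t) ≤ (t′ − t)·q(x,t) hold, and consequently ∫_{t₁}^{t₂} q(x,t) dt = μ(x,t₂) − μ(x,t₁). -/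
open MeasureTheory Set Filter

open Classical in
/-- The mass potential `m(x, t)`. -/
noncomputable def mpot (ρ0 ρb ub : ℝ → ℝ) (Fm Gm ys τs : ℝ → ℝ → ℝ) (x t : ℝ) : ℝ :=
  if Fm x t ≤ Gm x t ∧ 0 < x then ∫ η in (0:ℝ)..ys x t, ρ0 η
  else - ∫ η in (0:ℝ)..τs x t, ρb η * ub η

open Classical in
/-- The momentum potential `q(x, t)`. -/
noncomputable def qpot (ρ0 u0 ρb ub : ℝ → ℝ) (Fm Gm ys τs : ℝ → ℝ → ℝ) (x t : ℝ) : ℝ :=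
  if Fm x t ≤ Gm x t then ∫ η in (0:ℝ)..ys x t, ρ0 η * u0 η
  else - ∫ η in (0:ℝ)..τs x t, ρb η * ub η ^ 2

/-- `μ(x,t) = min (F(x,t), G(x,t))`. -/
noncomputable def μpot (Fm Gm : ℝ → ℝ → ℝ) (x t : ℝ) : ℝ := min (Fm x t) (Gm x t)

/-!
For fixed `x`, both `t ↦ F(y,x,t)` and `t ↦ G(τ,x,t)` are affine in `t`, with slopes
`∫₀^y ρ₀u₀` and `-∫₀^τ ρ_b u_b²`. Hence `μ(x,·)` is a minimum of affine functions, and the slope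
`q(x,t)` of an affine function realising the minimum at `t` is a supergradient of `μ(x,·)` at `t`:
`μ(x,t') ≤ μ(x,t) + (t' - t) q(x,t)`. Exchanging `t` and `t'` gives the two-sided bound. A
supergradient selection is antitone, so it is continuous off a countable set, and at every point of
continuity it is the derivative of `μ(x,·)`; the fundamental theorem of calculus with a countable
exceptional set then gives the integral identity.
-/

open Topology

def IsSupergradientOn (h q : ℝ → ℝ) (s : Set ℝ) : Prop :=
  ∀ t ∈ s, ∀ t' ∈ s, h t' ≤ h t + (t' - t) * q t

namespace IsSupergradientOn

variable {h q : ℝ → ℝ} {s : Set ℝ} {a b t t' : ℝ}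

theorem mono (hq : IsSupergradientOn h q s) {s' : Set ℝ} (hs : s' ⊆ s) :
    IsSupergradientOn h q s' :=
  fun t ht t' ht' => hq t (hs ht) t' (hs ht')

theorem mul_le_sub_le (hq : IsSupergradientOn h q s) (ht : t ∈ s) (ht' : t' ∈ s) :
    (t' - t) * q t' ≤ h t' - h t ∧ h t' - h t ≤ (t' - t) * q t := by
  constructor <;> linarith [hq t ht t' ht', hq t' ht' t ht]

theorem antitoneOn (hq : IsSupergradientOn h q s) : AntitoneOn q s := by
  intro t ht t' ht' htt'
  obtain rfl | hlt := htt'.eq_or_lt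
  · rfl
  · obtain ⟨h₁, h₂⟩ := hq.mul_le_sub_le ht ht'
    exact le_of_mul_le_mul_left (h₁.trans h₂) (sub_pos.2 hlt)

theorem slope_mem_uIcc (hq : IsSupergradientOn h q s) (ht : t ∈ s) (ht' : t' ∈ s)
    (hne : t ≠ t') : slope h t t' ∈ uIcc (q t) (q t') := by
  obtain ⟨h₁, h₂⟩ := hq.mul_le_sub_le ht ht'
  rw [slope_def_field]
  rcases hne.lt_or_gt with hlt | hgt
  · have hpos := sub_pos.2 hlt
    rw [uIcc_of_ge (hq.antitoneOn ht ht' hlt.le)]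
    exact ⟨(le_div_iff₀ hpos).2 (by linarith), (div_le_iff₀ hpos).2 (by linarith)⟩
  · have hneg := sub_neg.2 hgt
    rw [uIcc_of_le (hq.antitoneOn ht' ht hgt.le)]
    exact ⟨(le_div_iff_of_neg hneg).2 (by linarith), (div_le_iff_of_neg hneg).2 (by linarith)⟩

theorem continuousOn_Icc (hq : IsSupergradientOn h q (Icc a b)) : ContinuousOn h (Icc a b) := by
  refine (LipschitzOnWith.of_dist_le' (K := max |q b| |q a|) fun t ht t' ht' => ?_).continuousOn
  obtain rfl | hne := eq_or_ne t t'
  · simp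
  have hbound : ∀ r ∈ Icc a b, q r ∈ Icc (q b) (q a) := fun r hr =>
    ⟨hq.antitoneOn hr (right_mem_Icc.2 (hr.1.trans hr.2)) hr.2,
      hq.antitoneOn (left_mem_Icc.2 (hr.1.trans hr.2)) hr hr.1⟩
  have hslope := uIcc_subset_Icc (hbound t ht) (hbound t' ht') (hq.slope_mem_uIcc ht ht' hne)
  calc dist (h t) (h t') = |t' - t| * |slope h t t'| := by
        rw [Real.dist_eq, abs_sub_comm, ← abs_mul, ← smul_eq_mul, sub_smul_slope, vsub_eq_sub]
    _ ≤ |t' - t| * max |q b| |q a| :=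
        mul_le_mul_of_nonneg_left (abs_le_max_abs_abs hslope.1 hslope.2) (abs_nonneg _)
    _ = max |q b| |q a| * dist t t' := by rw [Real.dist_eq, abs_sub_comm, mul_comm]

theorem hasDerivAt (hq : IsSupergradientOn h q (Icc a b)) (ht : t ∈ Ioo a b)
    (hcont : ContinuousAt q t) : HasDerivAt h (q t) t := by
  rw [hasDerivAt_iff_tendsto_slope, tendsto_iff_norm_sub_tendsto_zero]
  have hnear : ∀ᶠ r in 𝓝[≠] t, r ∈ Icc a b ∧ r ≠ t :=
    (eventually_nhdsWithin_of_eventually_nhds (Icc_mem_nhds ht.1 ht.2)).and self_mem_nhdsWithin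
  refine squeeze_zero' (.of_forall fun _ => norm_nonneg _) (hnear.mono fun r hr => ?_)
    (tendsto_iff_norm_sub_tendsto_zero.1 (hcont.tendsto.mono_left nhdsWithin_le_nhds))
  simpa only [Real.norm_eq_abs] using
    abs_sub_left_of_mem_uIcc (hq.slope_mem_uIcc (Ioo_subset_Icc_self ht) hr.1 hr.2.symm)

theorem integral_eq_sub (hq : IsSupergradientOn h q (Icc a b)) (hab : a ≤ b) :
    ∫ t in a..b, q t = h b - h a := by
  refine integral_eq_of_hasDerivAt_off_countable_of_le h q hab
    hq.antitoneOn.countable_not_continuousWithinAt hq.continuousOn_Icc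
    (fun t ht => hq.hasDerivAt ht.1 ?_) ?_
  · exact (not_and_not_right.1 ht.2 (Ioo_subset_Icc_self ht.1)).continuousAt
      (Icc_mem_nhds ht.1.1 ht.1.2)
  · exact AntitoneOn.intervalIntegrable (uIcc_of_le hab ▸ hq.antitoneOn)

theorem min {f g p r : ℝ → ℝ} (hf : IsSupergradientOn f p s) (hg : IsSupergradientOn g r s) :
    IsSupergradientOn (fun t => min (f t) (g t)) (fun t => if f t ≤ g t then p t else r t) s := by
  intro t ht t' ht'
  by_cases hfg : f t ≤ g t
  · simpa only [if_pos hfg, min_eq_left hfg] using (min_le_left _ _).trans (hf t ht t' ht')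
  · simpa only [if_neg hfg, min_eq_right (le_of_not_ge hfg)] using
      (min_le_right _ _).trans (hg t ht t' ht')

end IsSupergradientOn

theorem IsMinValue.eq_of_minimizesOn {f : ℝ → ℝ} {v a : ℝ} (hv : IsMinValue f v)
    (ha : MinimizesOn f a) : f a = v := by
  obtain ⟨⟨b, hb, rfl⟩, hmin⟩ := hv
  exact le_antisymm (ha.2 b hb) (hmin a ha.1)

theorem isSupergradientOn_of_isMinValue {φ : ℝ → ℝ → ℝ} {c k v y : ℝ → ℝ} {s : Set ℝ}
    (haff : ∀ z, 0 ≤ z → ∀ t, φ z t = c z + t * k z)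
    (hv : ∀ t ∈ s, IsMinValue (fun z => φ z t) (v t))
    (hy : ∀ t ∈ s, MinimizesOn (fun z => φ z t) (y t)) :
    IsSupergradientOn v (fun t => k (y t)) s := by
  intro t ht t' ht'
  have hy₀ : 0 ≤ y t := (hy t ht).1
  have h₁ : v t' ≤ φ (y t) t' := (hv t' ht').2 _ hy₀
  have h₂ : φ (y t) t = v t := (hv t ht).eq_of_minimizesOn (hy t ht)
  rw [haff _ hy₀] at h₁ h₂
  linarith

theorem intervalIntegrable_of_locallyBounded {f : ℝ → ℝ} {y : ℝ} (hf : Measurable f)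
    (hnonneg : ∀ η, 0 ≤ η → 0 ≤ f η) (hloc : ∀ K : ℝ, ∃ M : ℝ, ∀ η ∈ Icc (0:ℝ) K, f η ≤ M)
    (hy : 0 ≤ y) : IntervalIntegrable f volume 0 y := by
  obtain ⟨M, hM⟩ := hloc y
  rw [intervalIntegrable_iff_integrableOn_Icc_of_le hy]
  refine .of_bound measure_Icc_lt_top hf.aestronglyMeasurable.restrict M
    (ae_restrict_of_forall_mem measurableSet_Icc fun η hη => ?_)
  rw [Real.norm_of_nonneg (hnonneg η hη.1)]
  exact hM η hη

theorem IntervalIntegrable.mul_of_bounded {f g : ℝ → ℝ} {y : ℝ}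
    (hf : IntervalIntegrable f volume 0 y) (hg : Measurable g)
    (hbdd : ∃ M : ℝ, ∀ η, 0 ≤ η → |g η| ≤ M) (hy : 0 ≤ y) :
    IntervalIntegrable (fun η => f η * g η) volume 0 y := by
  obtain ⟨M, hM⟩ := hbdd
  rw [intervalIntegrable_iff_integrableOn_Icc_of_le hy] at hf ⊢
  exact hf.mul_bdd hg.aestronglyMeasurable.restrict
    (ae_restrict_of_forall_mem measurableSet_Icc fun η hη => hM η hη.1)

theorem Fpot_eq_add_mul {ρ0 u0 : ℝ → ℝ} {y : ℝ} (x t : ℝ)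
    (hρ0 : IntervalIntegrable ρ0 volume 0 y)
    (hρ0u0 : IntervalIntegrable (fun η => ρ0 η * u0 η) volume 0 y) :
    Fpot ρ0 u0 y x t =
      (∫ η in (0:ℝ)..y, (η - x) * ρ0 η) + t * ∫ η in (0:ℝ)..y, ρ0 η * u0 η := by
  rw [Fpot, ← intervalIntegral.integral_const_mul, ← intervalIntegral.integral_add
    (hρ0.continuousOn_mul (by fun_prop)) (hρ0u0.const_mul t)]
  congr 1 with η
  ring

theorem Gpot_eq_add_mul {ρb ub : ℝ → ℝ} {τ : ℝ} (x t : ℝ)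
    (hρbub : IntervalIntegrable (fun η => ρb η * ub η) volume 0 τ)
    (hρbub2 : IntervalIntegrable (fun η => ρb η * ub η ^ 2) volume 0 τ) :
    Gpot ρb ub τ x t =
      (∫ η in (0:ℝ)..τ, (x * (ρb η * ub η) + η * (ρb η * ub η ^ 2))) +
        t * -∫ η in (0:ℝ)..τ, ρb η * ub η ^ 2 := by
  rw [Gpot, ← intervalIntegral.integral_neg, ← intervalIntegral.integral_const_mul,
    ← intervalIntegral.integral_add ((hρbub.const_mul x).add (hρbub2.continuousOn_mul
      (continuousOn_id' _))) (hρbub2.neg.const_mul (f := fun η => -(ρb η * ub η ^ 2)) t)]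
  congr 1 with η
  ring

theorem stmt15_general
    (ρ0 u0 ρb ub : ℝ → ℝ)
    (hρ0meas : Measurable ρ0) (hu0meas : Measurable u0)
    (hρbmeas : Measurable ρb) (hubmeas : Measurable ub)
    (hρ0pos : ∀ η, 0 ≤ η → 0 < ρ0 η)
    (hρbpos : ∀ η, 0 ≤ η → 0 < ρb η)
    (hρ0loc : ∀ K : ℝ, ∃ M : ℝ, ∀ η ∈ Set.Icc (0:ℝ) K, ρ0 η ≤ M)
    (hρbloc : ∀ K : ℝ, ∃ M : ℝ, ∀ η ∈ Set.Icc (0:ℝ) K, ρb η ≤ M)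
    (hu0bdd : ∃ M : ℝ, ∀ η, 0 ≤ η → |u0 η| ≤ M)
    (hubbdd : ∃ M : ℝ, ∀ η, 0 ≤ η → |ub η| ≤ M)
    (Fm Gm : ℝ → ℝ → ℝ)
    (hFm : ∀ x t, 0 ≤ x → 0 ≤ t → IsMinValue (fun y => Fpot ρ0 u0 y x t) (Fm x t))
    (hGm : ∀ x t, 0 ≤ x → 0 ≤ t → IsMinValue (fun τ => Gpot ρb ub τ x t) (Gm x t))
    (ys τs : ℝ → ℝ → ℝ)
    (hys : ∀ x t, 0 ≤ x → 0 ≤ t → SmallestMinimizer (fun y => Fpot ρ0 u0 y x t) (ys x t))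
    (hτs : ∀ x t, 0 ≤ x → 0 ≤ t → SmallestMinimizer (fun τ => Gpot ρb ub τ x t) (τs x t))
    (x t₁ t₂ : ℝ) (hx : 0 < x) (ht₁ : 0 < t₁) (ht : t₁ < t₂) :
    (∀ t t', t₁ ≤ t → t < t' → t' ≤ t₂ →
      (t' - t) * qpot ρ0 u0 ρb ub Fm Gm ys τs x t' ≤
        μpot Fm Gm x t' - μpot Fm Gm x t ∧
      μpot Fm Gm x t' - μpot Fm Gm x t ≤
        (t' - t) * qpot ρ0 u0 ρb ub Fm Gm ys τs x t) ∧
    (∫ t in t₁..t₂, qpot ρ0 u0 ρb ub Fm Gm ys τs x t) =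
      μpot Fm Gm x t₂ - μpot Fm Gm x t₁ := by
  have hρ0 {y : ℝ} (hy : 0 ≤ y) : IntervalIntegrable ρ0 volume 0 y :=
    intervalIntegrable_of_locallyBounded hρ0meas (fun η hη => (hρ0pos η hη).le) hρ0loc hy
  have hρb {y : ℝ} (hy : 0 ≤ y) : IntervalIntegrable ρb volume 0 y :=
    intervalIntegrable_of_locallyBounded hρbmeas (fun η hη => (hρbpos η hη).le) hρbloc hy
  have hub2 : ∃ M : ℝ, ∀ η, 0 ≤ η → |ub η ^ 2| ≤ M := by
    obtain ⟨M, hM⟩ := hubbdd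
    exact ⟨M ^ 2, fun η hη => abs_pow (ub η) 2 ▸ pow_le_pow_left₀ (abs_nonneg _) (hM η hη) 2⟩
  have hF : IsSupergradientOn (Fm x) (fun t => ∫ η in (0:ℝ)..ys x t, ρ0 η * u0 η) (Ici 0) :=
    isSupergradientOn_of_isMinValue (k := fun y => ∫ η in (0:ℝ)..y, ρ0 η * u0 η)
      (fun z hz t => Fpot_eq_add_mul x t (hρ0 hz) ((hρ0 hz).mul_of_bounded hu0meas hu0bdd hz))
      (fun t ht => hFm x t hx.le ht) (fun t ht => (hys x t hx.le ht).1)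
  have hG : IsSupergradientOn (Gm x) (fun t => -∫ η in (0:ℝ)..τs x t, ρb η * ub η ^ 2) (Ici 0) :=
    isSupergradientOn_of_isMinValue (k := fun τ => -∫ η in (0:ℝ)..τ, ρb η * ub η ^ 2)
      (fun z hz t => Gpot_eq_add_mul x t ((hρb hz).mul_of_bounded hubmeas hubbdd hz)
        ((hρb hz).mul_of_bounded (hubmeas.pow_const 2) hub2 hz))
      (fun t ht => hGm x t hx.le ht) (fun t ht => (hτs x t hx.le ht).1)
  have hμ : IsSupergradientOn (μpot Fm Gm x) (qpot ρ0 u0 ρb ub Fm Gm ys τs x) (Icc t₁ t₂) :=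
    (hF.min hG).mono (Icc_subset_Ici_self.trans (Ici_subset_Ici.2 ht₁.le))
  exact ⟨fun t t' ht ht' ht'₂ => hμ.mul_le_sub_le ⟨ht, ht'.le.trans ht'₂⟩ ⟨ht.trans ht'.le, ht'₂⟩,
    hμ.integral_eq_sub ht.le⟩

theorem stmt15
    (ρ0 u0 ρb ub : ℝ → ℝ)
    (hρ0meas : Measurable ρ0) (hu0meas : Measurable u0)
    (hρbmeas : Measurable ρb) (hubmeas : Measurable ub)
    (hρ0pos : ∀ η, 0 ≤ η → 0 < ρ0 η)
    (hρbpos : ∀ η, 0 ≤ η → 0 < ρb η)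
    (hubpos : ∀ η, 0 ≤ η → 0 < ub η)
    (hρ0loc : ∀ K : ℝ, ∃ M : ℝ, ∀ η ∈ Set.Icc (0:ℝ) K, ρ0 η ≤ M)
    (hρbloc : ∀ K : ℝ, ∃ M : ℝ, ∀ η ∈ Set.Icc (0:ℝ) K, ρb η ≤ M)
    (hu0bdd : ∃ M : ℝ, ∀ η, 0 ≤ η → |u0 η| ≤ M)
    (hubbdd : ∃ M : ℝ, ∀ η, 0 ≤ η → |ub η| ≤ M)
    (Fm Gm : ℝ → ℝ → ℝ)
    (hFm : ∀ x t, 0 ≤ x → 0 ≤ t → IsMinValue (fun y => Fpot ρ0 u0 y x t) (Fm x t))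
    (hGm : ∀ x t, 0 ≤ x → 0 ≤ t → IsMinValue (fun τ => Gpot ρb ub τ x t) (Gm x t))
    (ys yS τs τS : ℝ → ℝ → ℝ)
    (hys : ∀ x t, 0 ≤ x → 0 ≤ t → SmallestMinimizer (fun y => Fpot ρ0 u0 y x t) (ys x t))
    (hyS : ∀ x t, 0 ≤ x → 0 ≤ t → LargestMinimizer (fun y => Fpot ρ0 u0 y x t) (yS x t))
    (hτs : ∀ x t, 0 ≤ x → 0 ≤ t → SmallestMinimizer (fun τ => Gpot ρb ub τ x t) (τs x t))
    (hτS : ∀ x t, 0 ≤ x → 0 ≤ t → LargestMinimizer (fun τ => Gpot ρb ub τ x t) (τS x t))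
    (x t₁ t₂ : ℝ) (hx : 0 < x) (ht₁ : 0 < t₁) (ht : t₁ < t₂) :
    (∀ t t', t₁ ≤ t → t < t' → t' ≤ t₂ →
      (t' - t) * qpot ρ0 u0 ρb ub Fm Gm ys τs x t' ≤
        μpot Fm Gm x t' - μpot Fm Gm x t ∧
      μpot Fm Gm x t' - μpot Fm Gm x t ≤
        (t' - t) * qpot ρ0 u0 ρb ub Fm Gm ys τs x t) ∧
    (∫ t in t₁..t₂, qpot ρ0 u0 ρb ub Fm Gm ys τs x t) =
      μpot Fm Gm x t₂ - μpot Fm Gm x t₁ :=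
  stmt15_general ρ0 u0 ρb ub hρ0meas hu0meas hρbmeas hubmeas hρ0pos hρbpos hρ0loc hρbloc hu0bdd
    hubbdd Fm Gm hFm hGm ys τs hys hτs x t₁ t₂ hx ht₁ ht
end
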